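/- arXiv:2112.07836 — 6 statements merged into one kernel-verified Lean document; each statement's English description precedes it below -/
import Mathlib

section
/- Let d ≥ 1, 1 ≤ K ≤ d, and let x ∈ ℝ^d. Then ‖x − x^[K]‖₂ ≤ ‖x‖₁ / (2√K). -/
/-- `y` is a best-`K` approximation of `x`: it keeps `K` largest-magnitude entries
of `x` and sets all other entries to `0`. -/
def IsBestApprox {d : ℕ} (K : ℕ) (x y : Fin d → ℝ) : Prop :=
  ∃ S : Finset (Fin d), S.card = K ∧
    (∀ i ∈ S, y i = x i) ∧ (∀ i ∉ S, y i = 0) ∧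
    (∀ i ∈ S, ∀ j ∉ S, |x j| ≤ |x i|)

theorem stmt0 (d K : ℕ) (hd : 1 ≤ d) (hK1 : 1 ≤ K) (hKd : K ≤ d)
    (x y : Fin d → ℝ) (hy : IsBestApprox K x y) :
    Real.sqrt (∑ i, (x i - y i) ^ 2) ≤ (∑ i, |x i|) / (2 * Real.sqrt K) := by
  obtain ⟨S, hcard, hS, hSc, hmax⟩ := hy
  set a := ∑ j ∈ S, |x j| with ha
  set b := ∑ i ∈ Sᶜ, |x i| with hb
  have ha0 : 0 ≤ a := Finset.sum_nonneg fun _ _ => abs_nonneg _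
  have hb0 : 0 ≤ b := Finset.sum_nonneg fun _ _ => abs_nonneg _
  have hK0 : (0:ℝ) < K := by exact_mod_cast hK1
  have hsum : ∑ i, (x i - y i) ^ 2 = ∑ i ∈ Sᶜ, (x i) ^ 2 := by
    rw [← Finset.sum_add_sum_compl S]
    have h1 : ∑ i ∈ S, (x i - y i) ^ 2 = 0 :=
      Finset.sum_eq_zero fun i hi => by rw [hS i hi]; ring
    rw [h1, zero_add]
    exact Finset.sum_congr rfl fun i hi => by
      rw [hSc i (Finset.mem_compl.mp hi)]; ring
  have habs : ∑ i, |x i| = a + b := (Finset.sum_add_sum_compl S _).symm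
  have hKb : ∀ i ∈ Sᶜ, (K:ℝ) * |x i| ≤ a := by
    intro i hi
    have hi' := Finset.mem_compl.mp hi
    calc (K:ℝ) * |x i| = ∑ _j ∈ S, |x i| := by
          rw [Finset.sum_const, hcard, nsmul_eq_mul]
      _ ≤ a := Finset.sum_le_sum fun j hj => hmax j hj i hi'
  have hmain : (K:ℝ) * ∑ i ∈ Sᶜ, (x i) ^ 2 ≤ a * b := by
    rw [Finset.mul_sum, hb, Finset.mul_sum]
    refine Finset.sum_le_sum fun i hi => ?_
    have h1 : (K:ℝ) * (x i) ^ 2 = ((K:ℝ) * |x i|) * |x i| := by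
      rw [← sq_abs]; ring
    rw [h1]
    exact mul_le_mul_of_nonneg_right (hKb i hi) (abs_nonneg _)
  have hquad : ∑ i ∈ Sᶜ, (x i) ^ 2 ≤ (a + b) ^ 2 / (4 * K) := by
    rw [le_div_iff₀ (by positivity)]
    nlinarith [sq_nonneg (a - b)]
  rw [hsum, habs]
  calc Real.sqrt (∑ i ∈ Sᶜ, (x i) ^ 2) ≤ Real.sqrt ((a + b) ^ 2 / (4 * K)) :=
        Real.sqrt_le_sqrt hquad
    _ = (a + b) / (2 * Real.sqrt K) := by
        rw [Real.sqrt_div (by positivity), Real.sqrt_sq (by positivity),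
          show (4:ℝ) * K = 2 ^ 2 * K by ring,
          Real.sqrt_mul (by positivity), Real.sqrt_sq (by norm_num)]
end

section
/- The sparsity measure sp is Schur-concave on nonnegative vectors: let x, y ∈ ℝ^d be nonzero vectors with nonnegative entries such that x majorizes y, i.e., ∑_{i=1}^d x_i = ∑_{i=1}^d y_i and for every k ∈ {1,…,d} the sum of the k largest entries of x is at least the sum of the k largest entries of y. Then sp(x) ≤ sp(y). -/
/-- The sparsity measure `sp x = ‖x‖₁² / (d · ‖x‖₂²)`. -/
noncomputable def sp {d : ℕ} (x : Fin d → ℝ) : ℝ :=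
  (∑ i, |x i|) ^ 2 / ((d : ℝ) * ∑ i, (x i) ^ 2)

/-- The sum of the `k` largest entries of `x`, i.e. the largest possible sum
of `k` distinct entries of `x`. -/
noncomputable def topSum {d : ℕ} (k : ℕ) (x : Fin d → ℝ) : ℝ :=
  sSup {s : ℝ | ∃ S : Finset (Fin d), S.card = k ∧ s = ∑ i ∈ S, x i}

open Finset

/-- initial segment of `Fin d` of length `k`. -/
def iseg (d k : ℕ) : Finset (Fin d) := Finset.univ.filter (fun i => (i : ℕ) < k)

lemma card_iseg (d k : ℕ) (hk : k ≤ d) : (iseg d k).card = k := by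
  classical
  have : iseg d k = (Finset.univ : Finset (Fin k)).image (Fin.castLE hk) := by
    ext i
    simp only [iseg, mem_filter, mem_univ, true_and, mem_image]
    constructor
    · intro h; exact ⟨⟨i, h⟩, rfl⟩
    · rintro ⟨j, -, rfl⟩; exact j.2
  rw [this, Finset.card_image_of_injective _ (Fin.castLE_injective hk), card_univ,
    Fintype.card_fin]

lemma sum_le_iseg {d : ℕ} (x' : Fin d → ℝ) (hx' : Antitone x') (T : Finset (Fin d)) :
    ∑ i ∈ T, x' i ≤ ∑ i ∈ iseg d T.card, x' i := by
  classical
  set k := T.card with hk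
  set F := iseg d k with hF
  have hkd : k ≤ d := by
    simpa using Finset.card_le_card (Finset.subset_univ T)
  have hcardF : F.card = k := card_iseg d k hkd
  have h1 := Finset.card_inter_add_card_sdiff T F
  have h2 := Finset.card_inter_add_card_sdiff F T
  rw [Finset.inter_comm] at h2
  have hcards : (T \ F).card = (F \ T).card := by omega
  have e : ↥(T \ F) ≃ ↥(F \ T) := Finset.equivOfCardEq hcards
  have hAB : ∑ i ∈ T \ F, x' i ≤ ∑ i ∈ F \ T, x' i := by
    rw [← Finset.sum_coe_sort (T \ F) x', ← Finset.sum_coe_sort (F \ T) x',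
      ← Equiv.sum_comp e (fun b : ↥(F \ T) => x' b)]
    apply Finset.sum_le_sum
    intro a _
    apply hx'
    have ha : (a : Fin d) ∈ T \ F := a.2
    have hb : ((e a : { x // x ∈ F \ T }) : Fin d) ∈ F \ T := (e a).2
    have ha' : ¬ ((a : Fin d) : ℕ) < k := by
      have := (Finset.mem_sdiff.mp ha).2
      simpa [hF, iseg] using this
    have hb' : (((e a : { x // x ∈ F \ T }) : Fin d) : ℕ) < k := by
      have := (Finset.mem_sdiff.mp hb).1
      simpa [hF, iseg] using this
    exact Fin.le_def.mpr (by omega)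
  calc ∑ i ∈ T, x' i = ∑ i ∈ T ∩ F, x' i + ∑ i ∈ T \ F, x' i :=
        (Finset.sum_inter_add_sum_sdiff T F x').symm
    _ ≤ ∑ i ∈ T ∩ F, x' i + ∑ i ∈ F \ T, x' i := by linarith
    _ = ∑ i ∈ F ∩ T, x' i + ∑ i ∈ F \ T, x' i := by rw [Finset.inter_comm]
    _ = ∑ i ∈ F, x' i := Finset.sum_inter_add_sum_sdiff F T x'

lemma topSum_eq {d : ℕ} (k : ℕ) (hk : k ≤ d) (x : Fin d → ℝ) (σ : Equiv.Perm (Fin d))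
    (hx' : Antitone (x ∘ σ)) :
    topSum k x = ∑ i ∈ iseg d k, x (σ i) := by
  classical
  have hbdd : BddAbove {s : ℝ | ∃ S : Finset (Fin d), S.card = k ∧ s = ∑ i ∈ S, x i} := by
    apply Set.Finite.bddAbove
    apply Set.Finite.subset (Set.finite_range (fun S : Finset (Fin d) => ∑ i ∈ S, x i))
    rintro s ⟨S, -, rfl⟩
    exact ⟨S, rfl⟩
  apply le_antisymm
  · apply csSup_le
    · refine ⟨∑ i ∈ (iseg d k).image σ, x i, (iseg d k).image σ, ?_, rfl⟩
      rw [Finset.card_image_of_injective _ σ.injective, card_iseg d k hk]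
    · rintro s ⟨S, hS, rfl⟩
      have h1 : ∑ i ∈ S, x i = ∑ j ∈ S.image σ.symm, (x ∘ σ) j := by
        rw [Finset.sum_image (fun a _ b _ h => σ.symm.injective h)]
        simp [Function.comp]
      rw [h1]
      have hcard : (S.image σ.symm).card = k := by
        rw [Finset.card_image_of_injective _ σ.symm.injective, hS]
      calc ∑ j ∈ S.image σ.symm, (x ∘ σ) j
          ≤ ∑ j ∈ iseg d (S.image σ.symm).card, (x ∘ σ) j := sum_le_iseg _ hx' _
        _ = ∑ i ∈ iseg d k, x (σ i) := by rw [hcard]; rfl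
  · apply le_csSup hbdd
    refine ⟨(iseg d k).image σ, ?_, ?_⟩
    · rw [Finset.card_image_of_injective _ σ.injective, card_iseg d k hk]
    · rw [Finset.sum_image (fun a _ b _ h => σ.injective h)]

/-- Abel-summation comparison. -/
lemma abel_compare (n : ℕ) (a c : ℕ → ℝ)
    (h : ∀ k, ∑ i ∈ Finset.range k, a i ≤ ∑ i ∈ Finset.range k, c i) :
    ∀ b : ℕ → ℝ, Antitone b → (∀ i, 0 ≤ b i) →
    ∑ i ∈ Finset.range n, a i * b i ≤ ∑ i ∈ Finset.range n, c i * b i := by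
  induction n with
  | zero => intro b _ _; simp
  | succ n ih =>
    intro b hb hb0
    set b' : ℕ → ℝ := fun i => b (min i n) - b n with hb'
    have hb'anti : Antitone b' := by
      intro i j hij
      have h2 : min i n ≤ min j n := min_le_min hij le_rfl
      have := hb h2
      simp only [hb']
      linarith
    have hb'0 : ∀ i, 0 ≤ b' i := fun i => by
      simp only [hb', sub_nonneg]; exact hb (min_le_right i n)
    have key : ∀ f : ℕ → ℝ, ∑ i ∈ Finset.range (n+1), f i * b i
        = ∑ i ∈ Finset.range n, f i * b' i + b n * ∑ i ∈ Finset.range (n+1), f i := by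
      intro f
      have step1 : ∑ i ∈ Finset.range (n+1), f i * b i
          = ∑ i ∈ Finset.range (n+1), (f i * b' i + b n * f i) := by
        apply Finset.sum_congr rfl
        intro i hi
        have hi' : i ≤ n := Nat.le_of_lt_succ (Finset.mem_range.mp hi)
        have hb'i : b' i = b i - b n := by simp [hb', min_eq_left hi']
        rw [hb'i]; ring
      rw [step1, Finset.sum_add_distrib, ← Finset.mul_sum,
        Finset.sum_range_succ (fun i => f i * b' i)]
      have hn : b' n = 0 := by simp [hb']
      rw [hn, mul_zero, add_zero]
    rw [key a, key c]
    have h1 : ∑ i ∈ Finset.range n, a i * b' i ≤ ∑ i ∈ Finset.range n, c i * b' i :=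
      ih b' hb'anti hb'0
    have h2 : b n * ∑ i ∈ Finset.range (n+1), a i ≤ b n * ∑ i ∈ Finset.range (n+1), c i :=
      mul_le_mul_of_nonneg_left (h (n+1)) (hb0 n)
    linarith

theorem stmt3 (d : ℕ) (x y : Fin d → ℝ) (hx : x ≠ 0) (hy : y ≠ 0)
    (hx0 : ∀ i, 0 ≤ x i) (hy0 : ∀ i, 0 ≤ y i)
    (hsum : ∑ i, x i = ∑ i, y i)
    (hmaj : ∀ k : ℕ, 1 ≤ k → k ≤ d → topSum k y ≤ topSum k x) :
    sp x ≤ sp y := by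
  classical
  set σ := Tuple.sort (fun i => -x i) with hσ
  set τ := Tuple.sort (fun i => -y i) with hτ
  have hx'anti : Antitone (x ∘ σ) := by
    intro i j hij
    have := Tuple.monotone_sort (fun i => -x i) hij
    simpa [Function.comp] using this
  have hy'anti : Antitone (y ∘ τ) := by
    intro i j hij
    have := Tuple.monotone_sort (fun i => -y i) hij
    simpa [Function.comp] using this
  set x' : Fin d → ℝ := x ∘ σ with hx'def
  set y' : Fin d → ℝ := y ∘ τ with hy'def
  set a : ℕ → ℝ := fun i => if h : i < d then y' ⟨i, h⟩ else 0 with ha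
  set c : ℕ → ℝ := fun i => if h : i < d then x' ⟨i, h⟩ else 0 with hc
  have hx'0 : ∀ i, 0 ≤ x' i := fun i => hx0 _
  have hy'0 : ∀ i, 0 ≤ y' i := fun i => hy0 _
  have ha0 : ∀ i, 0 ≤ a i := by
    intro i; simp only [ha]
    split
    · exact hy'0 _
    · exact le_rfl
  have haanti : Antitone a := by
    intro i j hij
    simp only [ha]
    by_cases hj : j < d
    · have hi : i < d := lt_of_le_of_lt hij hj
      simp only [dif_pos hi, dif_pos hj]
      exact hy'anti (show (⟨i, hi⟩ : Fin d) ≤ ⟨j, hj⟩ from hij)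
    · simp only [dif_neg hj]
      by_cases hi : i < d
      · simp only [dif_pos hi]; exact hy'0 _
      · simp only [dif_neg hi]; exact le_rfl
  -- bridge between range sums of extensions and iseg sums
  have hbridge : ∀ (f : Fin d → ℝ) (k : ℕ), k ≤ d →
      ∑ i ∈ Finset.range k, (if h : i < d then f ⟨i, h⟩ else 0) = ∑ i ∈ iseg d k, f i := by
    intro f k hkd
    refine Finset.sum_bij'
      (fun (i : ℕ) (hi : i ∈ Finset.range k) =>
        (⟨i, lt_of_lt_of_le (Finset.mem_range.mp hi) hkd⟩ : Fin d))
      (fun (b : Fin d) (hb : b ∈ iseg d k) => (b : ℕ)) ?_ ?_ ?_ ?_ ?_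
    · intro i hi
      simp only [iseg, mem_filter, mem_univ, true_and]
      exact Finset.mem_range.mp hi
    · intro b hb
      simp only [iseg, mem_filter] at hb
      exact Finset.mem_range.mpr hb.2
    · intro i hi; rfl
    · intro b hb; rfl
    · intro i hi
      exact dif_pos _
  -- partial sums comparison
  have hpartial : ∀ k, ∑ i ∈ Finset.range k, a i ≤ ∑ i ∈ Finset.range k, c i := by
    intro k
    rcases Nat.eq_zero_or_pos k with rfl | hk1
    · simp
    by_cases hkd : k ≤ d
    · have h1 := topSum_eq k hkd y τ hy'anti
      have h2 := topSum_eq k hkd x σ hx'anti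
      have h3 := hmaj k hk1 hkd
      rw [h1, h2] at h3
      calc ∑ i ∈ Finset.range k, a i = ∑ i ∈ iseg d k, y' i := hbridge y' k hkd
        _ ≤ ∑ i ∈ iseg d k, x' i := h3
        _ = ∑ i ∈ Finset.range k, c i := (hbridge x' k hkd).symm
    · push_neg at hkd
      have hsub : Finset.range d ⊆ Finset.range k := Finset.range_subset_range.mpr (le_of_lt hkd)
      have hzero : ∀ g : ℕ → ℝ, (∀ i, d ≤ i → g i = 0) →
          ∑ i ∈ Finset.range k, g i = ∑ i ∈ Finset.range d, g i := by
        intro g hg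
        exact (Finset.sum_subset hsub (fun i _ hi =>
          hg i (le_of_not_gt (fun h => hi (Finset.mem_range.mpr h))))).symm
      have haz : ∀ i, d ≤ i → a i = 0 := by
        intro i hi; simp only [ha]; rw [dif_neg (not_lt.mpr hi)]
      have hcz : ∀ i, d ≤ i → c i = 0 := by
        intro i hi; simp only [hc]; rw [dif_neg (not_lt.mpr hi)]
      rw [hzero a haz, hzero c hcz, hbridge y' d le_rfl, hbridge x' d le_rfl]
      have hiseg : iseg d d = Finset.univ := by
        ext i; simp [iseg, i.2]
      rw [hiseg]
      have hxs : ∑ i, x' i = ∑ i, x i := Equiv.sum_comp σ x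
      have hys : ∑ i, y' i = ∑ i, y i := Equiv.sum_comp τ y
      rw [hxs, hys, hsum]
  -- Abel summation
  have key := abel_compare d a c hpartial a haanti ha0
  -- identify the sums
  have hA : ∑ i ∈ Finset.range d, a i * a i = ∑ i, y i ^ 2 := by
    rw [← Fin.sum_univ_eq_sum_range (fun i => a i * a i) d]
    have : ∀ i : Fin d, a (i : ℕ) * a (i : ℕ) = y' i ^ 2 := by
      intro i
      simp only [ha, dif_pos i.2, Fin.eta, sq]
    rw [Finset.sum_congr rfl (fun i _ => this i)]
    exact Equiv.sum_comp τ (fun i => y i ^ 2)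
  have hC : ∑ i ∈ Finset.range d, c i * a i = ∑ i, x' i * y' i := by
    rw [← Fin.sum_univ_eq_sum_range (fun i => c i * a i) d]
    apply Finset.sum_congr rfl
    intro i _
    simp only [ha, hc, dif_pos i.2, Fin.eta]
  rw [hA, hC] at key
  -- Cauchy-Schwarz
  have hcs := Finset.sum_mul_sq_le_sq_mul_sq Finset.univ x' y'
  have hx2 : ∑ i, x' i ^ 2 = ∑ i, x i ^ 2 := Equiv.sum_comp σ (fun i => x i ^ 2)
  have hy2 : ∑ i, y' i ^ 2 = ∑ i, y i ^ 2 := Equiv.sum_comp τ (fun i => y i ^ 2)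
  rw [hx2, hy2] at hcs
  have hPpos : 0 < ∑ i, y i ^ 2 := by
    have hex : ∃ i, y i ≠ 0 := by
      by_contra h; push_neg at h; exact hy (funext h)
    obtain ⟨i, hi⟩ := hex
    exact Finset.sum_pos' (fun j _ => sq_nonneg _) ⟨i, Finset.mem_univ i, by positivity⟩
  have hPQ : ∑ i, y i ^ 2 ≤ ∑ i, x i ^ 2 := by
    have h1 : (∑ i, y i ^ 2) ^ 2 ≤ (∑ i, x' i * y' i) ^ 2 :=
      pow_le_pow_left₀ hPpos.le key 2
    have h2 : (∑ i, y i ^ 2) ^ 2 ≤ (∑ i, x i ^ 2) * ∑ i, y i ^ 2 := h1.trans hcs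
    nlinarith [hPpos]
  -- conclude
  have hd0 : 0 < d := by
    rcases Nat.eq_zero_or_pos d with rfl | h
    · exact absurd (funext fun i => i.elim0) hx
    · exact h
  have hnum : (∑ i, |x i|) = ∑ i, |y i| := by
    calc (∑ i, |x i|) = ∑ i, x i := Finset.sum_congr rfl (fun i _ => abs_of_nonneg (hx0 i))
      _ = ∑ i, y i := hsum
      _ = ∑ i, |y i| := Finset.sum_congr rfl (fun i _ => (abs_of_nonneg (hy0 i)).symm)
  unfold sp
  rw [hnum]
  apply div_le_div_of_nonneg_left (sq_nonneg _)
  · positivity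
  · have : (d : ℝ) ≥ 0 := Nat.cast_nonneg d
    exact mul_le_mul_of_nonneg_left hPQ this
end

section
/- Let d, Q, K be positive integers with K ≤ d, let C_s, C_n ≥ 0 and γ ∈ (0,1). Let x ∈ ℝ^d be nonzero, x̂ ∈ ℝ^d, and w ∈ ℝ^Q satisfy the reconstruction bound ‖x̂ − x‖₂ ≤ (C_s + 1)·‖x − x^[K]‖₂ + (C_s/√K)·‖x − x^[K]‖₁ + C_n·‖w‖₂, and suppose sp(x) ≤ γ · (2K/d) / (1 + C_s·(3 − 2K/d))². Then ‖x̂ − x‖₂ ≤ √(γ/2)·‖x‖₂ + C_n·‖w‖₂. -/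
set_option maxHeartbeats 1000000 in
theorem stmt10 (d Q K : ℕ) (hd : 0 < d) (hQ : 0 < Q) (hK : 0 < K) (hKd : K ≤ d)
    (Cs Cn γ : ℝ) (hCs : 0 ≤ Cs) (hCn : 0 ≤ Cn) (hγ0 : 0 < γ) (hγ1 : γ < 1)
    (x xhat xK : Fin d → ℝ) (w : Fin Q → ℝ) (hx : x ≠ 0)
    (hxK : IsBestApprox K x xK)
    (hbound : Real.sqrt (∑ i, (xhat i - x i) ^ 2) ≤
        (Cs + 1) * Real.sqrt (∑ i, (x i - xK i) ^ 2)
        + Cs / Real.sqrt K * ∑ i, |x i - xK i|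
        + Cn * Real.sqrt (∑ j, (w j) ^ 2))
    (hsp : sp x ≤ γ * (2 * (K : ℝ) / d) / (1 + Cs * (3 - 2 * (K : ℝ) / d)) ^ 2) :
    Real.sqrt (∑ i, (xhat i - x i) ^ 2) ≤
      Real.sqrt (γ / 2) * Real.sqrt (∑ i, (x i) ^ 2)
      + Cn * Real.sqrt (∑ j, (w j) ^ 2) := by
  obtain ⟨S, hScard, hS1, hS2, hS3⟩ := hxK
  simp only [sp] at hsp
  set L := ∑ i, |x i| with hLdef
  set t := ∑ i ∈ S, |x i| with htdef
  set N2 := ∑ i, (x i) ^ 2 with hN2def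
  have hdpos : (0 : ℝ) < d := by exact_mod_cast hd
  have hKpos : (0 : ℝ) < K := by exact_mod_cast hK
  have hKdR : (K : ℝ) ≤ d := by exact_mod_cast hKd
  have hL0 : 0 ≤ L := Finset.sum_nonneg fun i _ => abs_nonneg _
  have ht0 : 0 ≤ t := Finset.sum_nonneg fun i _ => abs_nonneg _
  have hN2pos : 0 < N2 := by
    have hex : ∃ i, x i ≠ 0 := by
      by_contra h; push_neg at h; exact hx (funext h)
    obtain ⟨i, hi⟩ := hex
    exact Finset.sum_pos' (fun j _ => sq_nonneg _) ⟨i, Finset.mem_univ i, by positivity⟩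
  have hsK : 0 < Real.sqrt K := Real.sqrt_pos.mpr hKpos
  -- split sums
  have hsplit : ∀ f : Fin d → ℝ, ∑ i, f i = ∑ i ∈ S, f i + ∑ i ∈ Sᶜ, f i := fun f =>
    (Finset.sum_add_sum_compl S f).symm
  have hLsplit : L = t + ∑ i ∈ Sᶜ, |x i| := hsplit fun i => |x i|
  have hr1 : ∑ i, |x i - xK i| = L - t := by
    rw [hsplit fun i => |x i - xK i|]
    have h1 : ∑ i ∈ S, |x i - xK i| = 0 :=
      Finset.sum_eq_zero fun i hi => by rw [hS1 i hi]; simp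
    have h2 : ∑ i ∈ Sᶜ, |x i - xK i| = ∑ i ∈ Sᶜ, |x i| :=
      Finset.sum_congr rfl fun i hi => by rw [hS2 i (Finset.mem_compl.mp hi), sub_zero]
    rw [h1, h2]; linarith [hLsplit]
  have hmin : ∀ j ∉ S, (K : ℝ) * |x j| ≤ t := by
    intro j hj
    have h := Finset.sum_le_sum fun i hi => hS3 i hi j hj
    simpa [Finset.sum_const, hScard, nsmul_eq_mul] using h
  -- residual ℓ2
  have hr2 : (K : ℝ) * ∑ i, (x i - xK i) ^ 2 ≤ t * (L - t) := by
    rw [hsplit fun i => (x i - xK i) ^ 2]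
    have h1 : ∑ i ∈ S, (x i - xK i) ^ 2 = 0 :=
      Finset.sum_eq_zero fun i hi => by rw [hS1 i hi]; ring
    have h2 : ∑ i ∈ Sᶜ, (x i - xK i) ^ 2 = ∑ i ∈ Sᶜ, (x i) ^ 2 :=
      Finset.sum_congr rfl fun i hi => by rw [hS2 i (Finset.mem_compl.mp hi), sub_zero]
    rw [h1, h2, zero_add]
    have h3 : (K : ℝ) * ∑ i ∈ Sᶜ, (x i) ^ 2 ≤ ∑ i ∈ Sᶜ, t * |x i| := by
      rw [Finset.mul_sum]
      refine Finset.sum_le_sum fun i hi => ?_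
      have hm := hmin i (Finset.mem_compl.mp hi)
      nlinarith [hm, abs_nonneg (x i), sq_abs (x i)]
    calc (K : ℝ) * ∑ i ∈ Sᶜ, (x i) ^ 2 ≤ ∑ i ∈ Sᶜ, t * |x i| := h3
      _ = t * (L - t) := by rw [← Finset.mul_sum]; congr 1; linarith [hLsplit]
  -- K L ≤ d t
  have htL : (K : ℝ) * L ≤ (d : ℝ) * t := by
    have h := Finset.sum_le_sum fun i hi => hmin i (Finset.mem_compl.mp hi)
    have hcard : (Sᶜ : Finset (Fin d)).card = d - K := by
      rw [Finset.card_compl, hScard]; simp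
    rw [← Finset.mul_sum, Finset.sum_const, hcard, nsmul_eq_mul] at h
    have hc : ((d - K : ℕ) : ℝ) = (d : ℝ) - K := by
      rw [Nat.cast_sub hKd]
    rw [hc] at h
    have : (K : ℝ) * (L - t) ≤ ((d : ℝ) - K) * t := by
      calc (K : ℝ) * (L - t) = (K : ℝ) * ∑ i ∈ Sᶜ, |x i| := by
            congr 1; linarith [hLsplit]
        _ ≤ ((d : ℝ) - K) * t := h
    nlinarith
  -- sparsity bound
  set B := Cs * (3 - 2 * (K : ℝ) / d) with hBdef
  have hB0 : 0 ≤ B := by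
    have h1 : 2 * (K : ℝ) / d ≤ 2 := by
      rw [div_le_iff₀ hdpos]; nlinarith
    have : 0 ≤ 3 - 2 * (K : ℝ) / d := by linarith
    exact mul_nonneg hCs this
  have h1B : (0 : ℝ) < 1 + B := by linarith
  have h6 : (1 + B) ^ 2 * L ^ 2 ≤ 2 * K * γ * N2 := by
    rw [div_le_div_iff₀ (by positivity) (by positivity)] at hsp
    have heq : γ * (2 * (K : ℝ) / d) * ((d : ℝ) * N2) = 2 * K * γ * N2 := by
      field_simp
    calc (1 + B) ^ 2 * L ^ 2 = L ^ 2 * (1 + B) ^ 2 := by ring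
      _ ≤ γ * (2 * (K : ℝ) / d) * ((d : ℝ) * N2) := hsp
      _ = 2 * K * γ * N2 := heq
  -- bound on sqrt residual
  have hA : Real.sqrt (∑ i, (x i - xK i) ^ 2) ≤ L / (2 * Real.sqrt K) := by
    have h1 : ∑ i, (x i - xK i) ^ 2 ≤ (L / 2) ^ 2 / K := by
      rw [le_div_iff₀ hKpos]
      have h2 : t * (L - t) ≤ (L / 2) ^ 2 := by nlinarith [sq_nonneg (L - 2 * t)]
      nlinarith [hr2]
    calc Real.sqrt (∑ i, (x i - xK i) ^ 2) ≤ Real.sqrt ((L / 2) ^ 2 / K) :=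
          Real.sqrt_le_sqrt h1
      _ = (L / 2) / Real.sqrt K := by
          rw [Real.sqrt_div (sq_nonneg _), Real.sqrt_sq (by linarith)]
      _ = L / (2 * Real.sqrt K) := by ring
  -- combine deterministic part
  have hmain : (Cs + 1) * Real.sqrt (∑ i, (x i - xK i) ^ 2)
      + Cs / Real.sqrt K * ∑ i, |x i - xK i|
      ≤ Real.sqrt (γ / 2) * Real.sqrt N2 := by
    have hC1 : (Cs + 1) * Real.sqrt (∑ i, (x i - xK i) ^ 2)
        ≤ (Cs + 1) * (L / (2 * Real.sqrt K)) :=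
      mul_le_mul_of_nonneg_left hA (by linarith)
    have hLt : L - t ≤ (1 - (K : ℝ) / d) * L := by
      rw [sub_mul, one_mul]
      have : (K : ℝ) / d * L ≤ t := by
        rw [div_mul_eq_mul_div, div_le_iff₀ hdpos]; nlinarith
      linarith
    have hC2 : Cs / Real.sqrt K * ∑ i, |x i - xK i|
        ≤ Cs / Real.sqrt K * ((1 - (K : ℝ) / d) * L) := by
      rw [hr1]
      exact mul_le_mul_of_nonneg_left hLt (by positivity)
    have heq : (Cs + 1) * (L / (2 * Real.sqrt K))
        + Cs / Real.sqrt K * ((1 - (K : ℝ) / d) * L)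
        = (1 + B) * L / (2 * Real.sqrt K) := by
      rw [hBdef]
      field_simp
      ring
    have hE : (1 + B) * L / (2 * Real.sqrt K) ≤ Real.sqrt (γ / 2) * Real.sqrt N2 := by
      rw [← Real.sqrt_mul (by positivity) N2]
      rw [div_le_iff₀ (by positivity)]
      have hLHS0 : 0 ≤ (1 + B) * L := mul_nonneg (by linarith) hL0
      have hsq : ((1 + B) * L) ^ 2 ≤ (Real.sqrt (γ / 2 * N2) * (2 * Real.sqrt K)) ^ 2 := by
        have e1 : (Real.sqrt (γ / 2 * N2)) ^ 2 = γ / 2 * N2 :=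
          Real.sq_sqrt (by positivity)
        have e2 : (Real.sqrt K) ^ 2 = K := Real.sq_sqrt hKpos.le
        have : (Real.sqrt (γ / 2 * N2) * (2 * Real.sqrt K)) ^ 2
            = γ / 2 * N2 * 4 * K := by
          rw [mul_pow, mul_pow, e1, e2]; ring
        rw [this]
        nlinarith [h6]
      have hR0 : 0 ≤ Real.sqrt (γ / 2 * N2) * (2 * Real.sqrt K) := by positivity
      nlinarith [hsq, hLHS0, hR0]
    linarith [hC1, hC2]
  linarith [hbound, hmain]
end

section
/- (Error feedback reformulation.) Let d, Q be positive integers with Q ≤ d, let η ∈ ℝ, and let Φ ∈ ℝ^{Q×d} satisfy Φ Φᵀ = (d/Q)·I_Q. Let (g(t))_{t≥1} ⊆ ℝ^d, (w(t))_{t≥1} ⊆ ℝ^Q, (Δ(t))_{t≥1} ⊆ ℝ^d be arbitrary sequences, and define (z(t))_{t≥1} ⊆ ℝ^Q and (ε(t))_{t≥1} ⊆ ℝ^Q by ε(1) = 0, z(t) = η·(Φ g(t) + w(t)) + ε(t), and ε(t+1) = z(t) − Φ Δ(t). Define (p(t))_{t≥1}, (e(t))_{t≥1} ⊆ ℝ^d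 by e(1) = 0, p(t) = η g(t) + e(t), and e(t+1) = p(t) − Δ(t) + (ηQ/d)·Φᵀ w(t). Then for every t ≥ 1: z(t) = Φ p(t) + η w(t) and ε(t) = Φ e(t). -/
open Matrix

theorem stmt11 (d Q : ℕ) (hd : 0 < d) (hQ : 0 < Q) (hQd : Q ≤ d) (η : ℝ)
    (Φ : Matrix (Fin Q) (Fin d) ℝ)
    (hΦ : Φ * Φᵀ = ((d : ℝ) / Q) • (1 : Matrix (Fin Q) (Fin Q) ℝ))
    (g Δ p e : ℕ → Fin d → ℝ) (w z ε : ℕ → Fin Q → ℝ)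
    (hε1 : ε 1 = 0)
    (hz : ∀ t, 1 ≤ t → z t = η • (Φ.mulVec (g t) + w t) + ε t)
    (hε : ∀ t, 1 ≤ t → ε (t + 1) = z t - Φ.mulVec (Δ t))
    (he1 : e 1 = 0)
    (hp : ∀ t, 1 ≤ t → p t = η • g t + e t)
    (he : ∀ t, 1 ≤ t →
      e (t + 1) = p t - Δ t + (η * Q / d) • Φᵀ.mulVec (w t)) :
    ∀ t, 1 ≤ t → z t = Φ.mulVec (p t) + η • w t ∧ ε t = Φ.mulVec (e t) := by
  have hd' : (d : ℝ) ≠ 0 := Nat.cast_ne_zero.mpr hd.ne'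
  have hQ' : (Q : ℝ) ≠ 0 := Nat.cast_ne_zero.mpr hQ.ne'
  have hc : η * Q / d * ((d : ℝ) / Q) = η := by field_simp
  have key : ∀ t, 1 ≤ t → ε t = Φ.mulVec (e t) := by
    intro t ht
    induction t with
    | zero => omega
    | succ n ih =>
      rcases Nat.lt_or_ge 1 (n + 1) with h | h
      · have hn : 1 ≤ n := by omega
        have hεn := ih hn
        rw [hε n hn, he n hn, hz n hn, hp n hn, hεn]
        rw [mulVec_add, mulVec_sub, mulVec_smul, mulVec_mulVec, hΦ, smul_mulVec,
          one_mulVec, mulVec_add, mulVec_smul, smul_smul, hc, smul_add]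
        abel
      · have : n + 1 = 1 := by omega
        rw [this, hε1, he1, mulVec_zero]
  intro t ht
  refine ⟨?_, key t ht⟩
  rw [hz t ht, hp t ht, key t ht, mulVec_add, mulVec_smul, smul_add]
  abel
end

section
/- (One-step error recursion in expectation.) Let d, Q be positive integers with Q ≤ d, let γ ∈ (0,1), η > 0, G, σ, C_n ≥ 0. Let (Ω, ℱ, ℙ) be a probability space with a sub-σ-algebra ℱ_t, let f : ℝ^d → ℝ be differentiable, and let x, e be ℱ_t-measurable ℝ^d-valued square-integrable random vectors, g an ℝ^d-valued and w an ℝ^Q-valued square-integrable random vector, and e⁺ an ℝ^d-valued square-integrable random vector, satisfying: E[g | ℱ_t] = ∇f(x) a.s., E[‖g − ∇f(x)‖₂²] ≤ G², E[‖w‖₂²] ≤ σ², and almost surely ‖e⁺‖₂ ≤ √(γ/2)·‖η g + e‖₂ + η(C_n + √(Q/d))·‖w‖₂. Then E[‖e⁺‖₂²] ≤ ((1+γ)/2)·E[‖e‖₂²] + η²·(γ(1+γ)/(1−γ))·E[‖∇f(x)‖₂²] + η²·[(γ(1+γ)/(1−γ))·G² + 2(C_n + √(Q/d))²·σ²]. 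-/
open MeasureTheory
open scoped RealInnerProductSpace

/-! Squaring the recursion with `(a + b)² ≤ 2a² + 2b²` reduces the claim to a bound on
`E‖η g + e‖²`. Writing `h = E[g | ℱ_t] = ∇f(x)`, the vector `η g + e` is the `ℱ_t`-measurable
`η h + e` plus the noise `η (g - h)`, which is orthogonal in `L²` to every `ℱ_t`-measurable
vector (pull-out property), so the two second moments add. Young's inequality with the conjugate
weights `(1 + γ)/(1 - γ)` and `(1 + γ)/(2γ)` then splits `E‖η h + e‖²`. -/

lemma sq_add_le_of_inv_add_inv_eq_one {p q : ℝ} (hp : 0 < p) (hq : 0 < q)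
    (hpq : p⁻¹ + q⁻¹ = 1) (s t : ℝ) : (s + t) ^ 2 ≤ p * s ^ 2 + q * t ^ 2 := by
  have hpq' : p + q = p * q := by field_simp at hpq; linarith
  -- `p * q * (p s² + q t² - (s + t)²) = (p s - q t)²`
  nlinarith [sq_nonneg (p * s - q * t), mul_pos hp hq]

section Integrals

variable {Ω : Type*} {mΩ : MeasurableSpace Ω} {μ : Measure Ω}

lemma integral_sq_le_of_le_add {X Y W : Ω → ℝ} {p q : ℝ} (hp : 0 < p) (hq : 0 < q)
    (hpq : p⁻¹ + q⁻¹ = 1) (hX : ∀ ω, 0 ≤ X ω) (hY : MemLp Y 2 μ) (hW : MemLp W 2 μ)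
    (hXYW : ∀ᵐ ω ∂μ, X ω ≤ Y ω + W ω) :
    ∫ ω, X ω ^ 2 ∂μ ≤ p * ∫ ω, Y ω ^ 2 ∂μ + q * ∫ ω, W ω ^ 2 ∂μ := by
  have hY2 := (hY.integrable_sq).const_mul p
  have hW2 := (hW.integrable_sq).const_mul q
  rw [← integral_const_mul, ← integral_const_mul, ← integral_add hY2 hW2]
  refine integral_mono_of_nonneg (.of_forall fun ω => sq_nonneg _) (hY2.add hW2) ?_
  filter_upwards [hXYW] with ω hω
  exact (pow_le_pow_left₀ (hX ω) hω 2).trans (sq_add_le_of_inv_add_inv_eq_one hp hq hpq _ _)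

variable {E : Type*} [NormedAddCommGroup E] [InnerProductSpace ℝ E]

lemma MeasureTheory.MemLp.integrable_inner {f g : Ω → E} (hf : MemLp f 2 μ) (hg : MemLp g 2 μ) :
    Integrable (fun ω => ⟪f ω, g ω⟫) μ :=
  memLp_one_iff_integrable.1 ((innerSL ℝ).memLp_of_bilin 1 hf hg)

variable [CompleteSpace E] {m : MeasurableSpace Ω} [IsFiniteMeasure μ] {Z g : Ω → E}

lemma integral_inner_sub_condExp_eq_zero (hm : m ≤ mΩ) (hZ : AEStronglyMeasurable[m] Z μ)
    (hZ2 : MemLp Z 2 μ) (hg : MemLp g 2 μ) :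
    ∫ ω, ⟪Z ω, g ω - μ[g|m] ω⟫ ∂μ = 0 := by
  simp_rw [inner_sub_right]
  rw [integral_sub (hZ2.integrable_inner hg) (hZ2.integrable_inner (hg.condExp one_le_two)),
    sub_eq_zero]
  calc ∫ ω, ⟪Z ω, g ω⟫ ∂μ = ∫ ω, μ[fun ω => ⟪Z ω, g ω⟫|m] ω ∂μ := (integral_condExp hm).symm
    _ = ∫ ω, ⟪Z ω, μ[g|m] ω⟫ ∂μ := integral_congr_ae <|
      condExp_bilin_of_aestronglyMeasurable_left (innerSL ℝ) hZ (hZ2.integrable_inner hg)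
        (hg.integrable one_le_two)

lemma integral_norm_add_smul_sub_condExp_sq (hm : m ≤ mΩ) (hZ : AEStronglyMeasurable[m] Z μ)
    (hZ2 : MemLp Z 2 μ) (hg : MemLp g 2 μ) (c : ℝ) :
    ∫ ω, ‖Z ω + c • (g ω - μ[g|m] ω)‖ ^ 2 ∂μ
      = ∫ ω, ‖Z ω‖ ^ 2 ∂μ + c ^ 2 * ∫ ω, ‖g ω - μ[g|m] ω‖ ^ 2 ∂μ := by
  have hξ : MemLp (fun ω => g ω - μ[g|m] ω) 2 μ := hg.sub (hg.condExp one_le_two)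
  have hexpand : ∀ ω, ‖Z ω + c • (g ω - μ[g|m] ω)‖ ^ 2 = ‖Z ω‖ ^ 2
      + (2 * c * ⟪Z ω, g ω - μ[g|m] ω⟫ + c ^ 2 * ‖g ω - μ[g|m] ω‖ ^ 2) := fun ω => by
    rw [norm_add_sq_real, inner_smul_right, norm_smul, mul_pow, Real.norm_eq_abs, sq_abs]
    ring
  simp_rw [hexpand]
  have hinner := (hZ2.integrable_inner hξ).const_mul (2 * c)
  have hnorm := hξ.norm.integrable_sq.const_mul (c ^ 2)
  rw [integral_add hZ2.norm.integrable_sq, integral_add hinner hnorm, integral_const_mul,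
    integral_const_mul, integral_inner_sub_condExp_eq_zero hm hZ hZ2 hg]
  · ring
  · exact hinner.add hnorm

lemma integral_norm_smul_add_sq_le (hm : m ≤ mΩ) {e : Ω → E} (he : StronglyMeasurable[m] e)
    (he2 : MemLp e 2 μ) (hg : MemLp g 2 μ) (η : ℝ) {p q : ℝ} (hp : 0 < p) (hq : 0 < q)
    (hpq : p⁻¹ + q⁻¹ = 1) :
    ∫ ω, ‖η • g ω + e ω‖ ^ 2 ∂μ ≤ p * (η ^ 2 * ∫ ω, ‖μ[g|m] ω‖ ^ 2 ∂μ)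
      + q * ∫ ω, ‖e ω‖ ^ 2 ∂μ + η ^ 2 * ∫ ω, ‖g ω - μ[g|m] ω‖ ^ 2 ∂μ := by
  have hh2 : MemLp μ[g|m] 2 μ := hg.condExp one_le_two
  have hZ : StronglyMeasurable[m] (fun ω => η • μ[g|m] ω + e ω) :=
    (stronglyMeasurable_condExp.const_smul η).add he
  have hsplit : ∫ ω, ‖η • g ω + e ω‖ ^ 2 ∂μ = ∫ ω, ‖η • μ[g|m] ω + e ω‖ ^ 2 ∂μ
      + η ^ 2 * ∫ ω, ‖g ω - μ[g|m] ω‖ ^ 2 ∂μ := by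
    rw [← integral_norm_add_smul_sub_condExp_sq hm hZ.aestronglyMeasurable
      ((hh2.const_smul η).add he2) hg η]
    congr with ω
    rw [smul_sub]
    abel_nf
  have hyoung : ∫ ω, ‖η • μ[g|m] ω + e ω‖ ^ 2 ∂μ
      ≤ p * (η ^ 2 * ∫ ω, ‖μ[g|m] ω‖ ^ 2 ∂μ) + q * ∫ ω, ‖e ω‖ ^ 2 ∂μ := by
    have := integral_sq_le_of_le_add hp hq hpq (fun ω => norm_nonneg (η • μ[g|m] ω + e ω))
      (hh2.norm.const_mul |η|) he2.norm
      (.of_forall fun ω => (norm_add_le _ _).trans_eq (by rw [norm_smul, Real.norm_eq_abs]))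
    simpa only [mul_pow, sq_abs, integral_const_mul] using this
  linarith

end Integrals

theorem stmt12_general (d Q : ℕ)
    (γ η G σ Cn : ℝ) (hγ0 : 0 < γ) (hγ1 : γ < 1)
    {Ω : Type*} {m : MeasurableSpace Ω} (P : Measure Ω) [IsProbabilityMeasure P]
    (ℱt : MeasurableSpace Ω) (hℱt : ℱt ≤ m)
    (f : EuclideanSpace ℝ (Fin d) → ℝ)
    (x e eplus g : Ω → EuclideanSpace ℝ (Fin d)) (w : Ω → EuclideanSpace ℝ (Fin Q))
    (he : StronglyMeasurable[ℱt] e)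
    (heL2 : MemLp e 2 P) (hgL2 : MemLp g 2 P)
    (hwL2 : MemLp w 2 P)
    (hcond : P[g|ℱt] =ᵐ[P] fun ω => gradient f (x ω))
    (hvar : ∫ ω, ‖g ω - gradient f (x ω)‖ ^ 2 ∂P ≤ G ^ 2)
    (hnoise : ∫ ω, ‖w ω‖ ^ 2 ∂P ≤ σ ^ 2)
    (hrec : ∀ᵐ ω ∂P, ‖eplus ω‖ ≤ Real.sqrt (γ / 2) * ‖η • g ω + e ω‖
        + η * (Cn + Real.sqrt ((Q : ℝ) / d)) * ‖w ω‖) :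
    ∫ ω, ‖eplus ω‖ ^ 2 ∂P ≤
      (1 + γ) / 2 * ∫ ω, ‖e ω‖ ^ 2 ∂P
      + η ^ 2 * (γ * (1 + γ) / (1 - γ)) * ∫ ω, ‖gradient f (x ω)‖ ^ 2 ∂P
      + η ^ 2 * (γ * (1 + γ) / (1 - γ) * G ^ 2
          + 2 * (Cn + Real.sqrt ((Q : ℝ) / d)) ^ 2 * σ ^ 2) := by
  set c := Cn + Real.sqrt ((Q : ℝ) / d)
  have hrec_sq : ∫ ω, ‖eplus ω‖ ^ 2 ∂P
      ≤ γ * ∫ ω, ‖η • g ω + e ω‖ ^ 2 ∂P + 2 * (η * c) ^ 2 * ∫ ω, ‖w ω‖ ^ 2 ∂P := by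
    have := integral_sq_le_of_le_add (p := 2) (q := 2) two_pos two_pos (by norm_num)
      (fun ω => norm_nonneg (eplus ω)) (((hgL2.const_smul η).add heL2).norm.const_mul _)
      (hwL2.norm.const_mul (η * c)) hrec
    simp only [Pi.add_apply, Pi.smul_apply, mul_pow, integral_const_mul,
      Real.sq_sqrt (by positivity : 0 ≤ γ / 2)] at this
    linarith
  have h1γ : 0 < 1 - γ := by linarith
  have hsplit := integral_norm_smul_add_sq_le hℱt he heL2 hgL2 η
    (p := (1 + γ) / (1 - γ)) (q := (1 + γ) / (2 * γ)) (by positivity) (by positivity)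
    (by field_simp; ring)
  have hgrad_sq : ∫ ω, ‖gradient f (x ω)‖ ^ 2 ∂P = ∫ ω, ‖P[g|ℱt] ω‖ ^ 2 ∂P :=
    integral_congr_ae (by filter_upwards [hcond] with ω hω; rw [hω])
  have hvar' : ∫ ω, ‖g ω - P[g|ℱt] ω‖ ^ 2 ∂P ≤ G ^ 2 :=
    le_of_eq_of_le (integral_congr_ae (by filter_upwards [hcond] with ω hω; rw [hω])) hvar
  have hk : γ ≤ γ * (1 + γ) / (1 - γ) := by rw [le_div_iff₀ h1γ]; nlinarith
  rw [hgrad_sq]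
  calc _ ≤ γ * ((1 + γ) / (1 - γ) * (η ^ 2 * ∫ ω, ‖P[g|ℱt] ω‖ ^ 2 ∂P)
          + (1 + γ) / (2 * γ) * ∫ ω, ‖e ω‖ ^ 2 ∂P + η ^ 2 * G ^ 2) + 2 * (η * c) ^ 2 * σ ^ 2 := by
        refine hrec_sq.trans ?_
        gcongr
        exact hsplit.trans (by gcongr)
    _ = (1 + γ) / 2 * ∫ ω, ‖e ω‖ ^ 2 ∂P
        + η ^ 2 * (γ * (1 + γ) / (1 - γ)) * ∫ ω, ‖P[g|ℱt] ω‖ ^ 2 ∂P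
        + η ^ 2 * (γ * G ^ 2 + 2 * c ^ 2 * σ ^ 2) := by
      field_simp
      ring
    _ ≤ _ := by gcongr

theorem stmt12 (d Q : ℕ) (hd : 0 < d) (hQ : 0 < Q) (hQd : Q ≤ d)
    (γ η G σ Cn : ℝ) (hγ0 : 0 < γ) (hγ1 : γ < 1) (hη : 0 < η)
    (hG : 0 ≤ G) (hσ : 0 ≤ σ) (hCn : 0 ≤ Cn)
    {Ω : Type*} {m : MeasurableSpace Ω} (P : Measure Ω) [IsProbabilityMeasure P]
    (ℱt : MeasurableSpace Ω) (hℱt : ℱt ≤ m)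
    (f : EuclideanSpace ℝ (Fin d) → ℝ) (hf : Differentiable ℝ f)
    (x e eplus g : Ω → EuclideanSpace ℝ (Fin d)) (w : Ω → EuclideanSpace ℝ (Fin Q))
    (hx : StronglyMeasurable[ℱt] x) (he : StronglyMeasurable[ℱt] e)
    (hxL2 : MemLp x 2 P) (heL2 : MemLp e 2 P) (hgL2 : MemLp g 2 P)
    (hwL2 : MemLp w 2 P) (heplusL2 : MemLp eplus 2 P)
    (hcond : P[g|ℱt] =ᵐ[P] fun ω => gradient f (x ω))
    (hvar : ∫ ω, ‖g ω - gradient f (x ω)‖ ^ 2 ∂P ≤ G ^ 2)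
    (hnoise : ∫ ω, ‖w ω‖ ^ 2 ∂P ≤ σ ^ 2)
    (hrec : ∀ᵐ ω ∂P, ‖eplus ω‖ ≤ Real.sqrt (γ / 2) * ‖η • g ω + e ω‖
        + η * (Cn + Real.sqrt ((Q : ℝ) / d)) * ‖w ω‖) :
    ∫ ω, ‖eplus ω‖ ^ 2 ∂P ≤
      (1 + γ) / 2 * ∫ ω, ‖e ω‖ ^ 2 ∂P
      + η ^ 2 * (γ * (1 + γ) / (1 - γ)) * ∫ ω, ‖gradient f (x ω)‖ ^ 2 ∂P
      + η ^ 2 * (γ * (1 + γ) / (1 - γ) * G ^ 2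
          + 2 * (Cn + Real.sqrt ((Q : ℝ) / d)) ^ 2 * σ ^ 2) :=
  stmt12_general d Q γ η G σ Cn hγ0 hγ1 P ℱt hℱt f x e eplus g w he heL2 hgL2 hwL2 hcond hvar hnoise
    hrec
end

section
/- (Cumulative error bound.) Let d, Q, T be positive integers with Q ≤ d, let γ ∈ (0,1), η > 0, G, σ, C_n ≥ 0. Let (Ω, ℱ, ℙ) be a probability space with filtration (ℱ_t)_{t≥1}, let f : ℝ^d → ℝ be differentiable, and for t = 1,…,T let x(t), e(t) be ℱ_t-measurable and g(t) (ℝ^d-valued), w(t) (ℝ^Q-valued) be ℱ_{t+1}-measurable square-integrable random vectors, and e(T+1) a square-integrable random vector, satisfying: E[g(t) | ℱ_t] = ∇f(x(t)) a.s.; E[‖g(t) − ∇f(x(t))‖₂²] ≤ G²; E[‖w(t)‖₂²] ≤ σ²; e(1) = 0; and almost surely ‖e(t+1)‖₂ ≤ √(γ/2)·‖η g(t) + e(t)‖₂ + η(C_n + √(Q/d))·‖w(t)‖₂ for 1 ≤ t ≤ T. Then (1/T)·∑_{t=1}^T E[‖e(t)‖₂²] ≤ (2η²/(1−γ))·[(γ(1+γ)/(1−γ))·G²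 + 2(C_n + √(Q/d))²·σ²] + (2η²γ(1+γ)/(1−γ)²)·(1/T)·∑_{t=1}^T E[‖∇f(x(t))‖₂²]. -/
/-!
Squaring the recursion and applying Young's inequality with weight `(1 - γ) / (2γ)` to
`η g(t) + e(t)` gives
`E‖e(t+1)‖² ≤ (1+γ)/2 · E‖e(t)‖² + γ(1+γ)/(1-γ) · η² E‖g(t)‖² + 2η²(C_n + √(Q/d))² E‖w(t)‖²`.
Since `g(t) - ∇f(x(t))` has zero conditional mean given `ℱ_t` and `∇f(x(t))` is
`ℱ_t`-measurable, the two are orthogonal in `L²`, so `E‖g(t)‖² = E‖∇f(x(t))‖² + E‖g(t) - ∇f(x(t))‖²`.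
Summing over `t` with `e(1) = 0`, the contraction factor `(1+γ)/2 < 1` lets the left-hand sum
absorb its own copy on the right, at the price of the factor `2/(1-γ)`.
-/

open MeasureTheory

lemma measurable_gradient {F : Type*} [NormedAddCommGroup F] [InnerProductSpace ℝ F]
    [CompleteSpace F] [MeasurableSpace F] [BorelSpace F] (f : F → ℝ) :
    Measurable (gradient f) := by
  borelize (F →L[ℝ] ℝ)
  exact (InnerProductSpace.toDual ℝ F).symm.continuous.measurable.comp (measurable_fderiv ℝ f)

lemma sq_le_of_le_sqrt_half_mul_add {γ L a b : ℝ} (hγ : 0 ≤ γ) (hL : 0 ≤ L)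
    (h : L ≤ √(γ / 2) * a + b) : L ^ 2 ≤ γ * a ^ 2 + 2 * b ^ 2 :=
  calc L ^ 2 ≤ (√(γ / 2) * a + b) ^ 2 := pow_le_pow_left₀ hL h 2
    _ ≤ 2 * ((√(γ / 2) * a) ^ 2 + b ^ 2) := add_sq_le
    _ = γ * a ^ 2 + 2 * b ^ 2 := by
        rw [mul_pow, Real.sq_sqrt (by positivity)]
        ring

lemma mul_norm_add_sq_le {E : Type*} [SeminormedAddCommGroup E] {γ : ℝ} (hγ0 : 0 ≤ γ)
    (hγ1 : γ < 1) (u v : E) :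
    γ * ‖u + v‖ ^ 2 ≤ (1 + γ) / 2 * ‖u‖ ^ 2 + γ * (1 + γ) / (1 - γ) * ‖v‖ ^ 2 := by
  have h1γ : 0 < 1 - γ := sub_pos.mpr hγ1
  have hsq : ‖u + v‖ ^ 2 ≤ (‖u‖ + ‖v‖) ^ 2 := pow_le_pow_left₀ (norm_nonneg _) (norm_add_le u v) 2
  -- the gap, times `2 * (1 - γ)`, is `((1 - γ) * ‖u‖ - 2 * γ * ‖v‖) ^ 2`
  have key : 2 * (1 - γ) * (γ * (‖u‖ + ‖v‖) ^ 2)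
      ≤ 2 * (1 - γ) * ((1 + γ) / 2 * ‖u‖ ^ 2 + γ * (1 + γ) / (1 - γ) * ‖v‖ ^ 2) := by
    have hexpand : 2 * (1 - γ) * ((1 + γ) / 2 * ‖u‖ ^ 2 + γ * (1 + γ) / (1 - γ) * ‖v‖ ^ 2)
        = (1 - γ) * (1 + γ) * ‖u‖ ^ 2 + 2 * γ * (1 + γ) * ‖v‖ ^ 2 := by
      field_simp
    nlinarith [sq_nonneg ((1 - γ) * ‖u‖ - 2 * γ * ‖v‖)]
  calc γ * ‖u + v‖ ^ 2 ≤ γ * (‖u‖ + ‖v‖) ^ 2 := mul_le_mul_of_nonneg_left hsq hγ0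
    _ ≤ _ := le_of_mul_le_mul_left key (by positivity)

lemma one_sub_mul_sum_Icc_le {a b : ℕ → ℝ} {ρ : ℝ} {T : ℕ} (ha1 : a 1 = 0)
    (haT : 0 ≤ a (T + 1)) (hstep : ∀ t ∈ Finset.Icc 1 T, a (t + 1) ≤ ρ * a t + b t) :
    (1 - ρ) * ∑ t ∈ Finset.Icc 1 T, a t ≤ ∑ t ∈ Finset.Icc 1 T, b t := by
  suffices h : ∀ n ≤ T, (1 - ρ) * ∑ t ∈ Finset.Icc 1 n, a t + a (n + 1)
      ≤ ∑ t ∈ Finset.Icc 1 n, b t by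
    linarith [h T le_rfl]
  intro n
  induction n with
  | zero => simp [ha1]
  | succ n ih =>
    intro hn
    have := hstep (n + 1) (Finset.mem_Icc.mpr ⟨by omega, hn⟩)
    rw [Finset.sum_Icc_succ_top (by omega), Finset.sum_Icc_succ_top (by omega)]
    linarith [ih (by omega)]

lemma average_Icc_le_of_le_mul_add {a b : ℕ → ℝ} {ρ C : ℝ} {T : ℕ} (hρ : ρ < 1) (hC : 0 ≤ C)
    (ha1 : a 1 = 0) (haT : 0 ≤ a (T + 1))
    (hstep : ∀ t ∈ Finset.Icc 1 T, a (t + 1) ≤ ρ * a t + (b t + C)) :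
    1 / (T : ℝ) * ∑ t ∈ Finset.Icc 1 T, a t
      ≤ (C + 1 / (T : ℝ) * ∑ t ∈ Finset.Icc 1 T, b t) / (1 - ρ) := by
  have hsum := one_sub_mul_sum_Icc_le ha1 haT hstep
  rw [Finset.sum_add_distrib, Finset.sum_const, Nat.card_Icc, Nat.add_sub_cancel,
    nsmul_eq_mul] at hsum
  obtain rfl | hT := T.eq_zero_or_pos
  · simp only [CharP.cast_eq_zero, div_zero, zero_mul, add_zero]
    exact div_nonneg hC (sub_pos.mpr hρ).le
  rw [le_div_iff₀ (sub_pos.mpr hρ)]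
  have hT' : (T : ℝ) ≠ 0 := by positivity
  calc (1 / (T : ℝ) * ∑ t ∈ Finset.Icc 1 T, a t) * (1 - ρ)
      = 1 / T * ((1 - ρ) * ∑ t ∈ Finset.Icc 1 T, a t) := by ring
    _ ≤ 1 / T * (∑ t ∈ Finset.Icc 1 T, b t + T * C) := by gcongr
    _ = C + 1 / T * ∑ t ∈ Finset.Icc 1 T, b t := by field_simp; ring

section ConditionalExpectation

variable {α E F : Type*} [NormedAddCommGroup E] [InnerProductSpace ℝ E] [CompleteSpace E]
  [NormedAddCommGroup F] {m m0 : MeasurableSpace α} {μ : Measure α} [IsFiniteMeasure μ]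

lemma integral_inner_eq_zero_of_condExp_ae_eq_zero (hm : m ≤ m0) {Y Z : α → E}
    (hY : MemLp Y 2 μ) (hYm : AEStronglyMeasurable[m] Y μ) (hZ : MemLp Z 2 μ)
    (hZc : μ[Z|m] =ᵐ[μ] 0) :
    ∫ ω, inner ℝ (Y ω) (Z ω) ∂μ = 0 := by
  have hYm' : AEStronglyMeasurable[m] (hY.toLp Y) μ := hYm.congr hY.coeFn_toLp.symm
  have h := inner_condExpL2_eq_inner_fun (𝕜 := ℝ) hm (hZ.toLp Z) (hY.toLp Y) hYm'
  rw [L2.inner_def, L2.inner_def] at h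
  calc ∫ ω, inner ℝ (Y ω) (Z ω) ∂μ
      = ∫ ω, inner ℝ (hZ.toLp Z ω) (hY.toLp Y ω) ∂μ := by
        refine integral_congr_ae ?_
        filter_upwards [hY.coeFn_toLp, hZ.coeFn_toLp] with ω hYω hZω
        rw [hYω, hZω, real_inner_comm]
    _ = ∫ ω, inner ℝ ((condExpL2 E ℝ hm (hZ.toLp Z) : α →₂[μ] E) ω) (hY.toLp Y ω) ∂μ := h.symm
    _ = 0 := by
        refine integral_eq_zero_of_ae ?_
        filter_upwards [(hZ.condExpL2_ae_eq_condExp (𝕜 := ℝ) hm).trans hZc] with ω hω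
        simp [hω]

lemma integral_norm_sq_eq_add_of_condExp_ae_eq (hm : m ≤ m0) {g h : α → E}
    (hg : MemLp g 2 μ) (hh : StronglyMeasurable[m] h) (hgh : μ[g|m] =ᵐ[μ] h) :
    ∫ ω, ‖g ω‖ ^ 2 ∂μ = ∫ ω, ‖h ω‖ ^ 2 ∂μ + ∫ ω, ‖g ω - h ω‖ ^ 2 ∂μ := by
  have hhL2 : MemLp h 2 μ := (hg.condExp one_le_two).ae_eq hgh
  have hdiff : MemLp (g - h) 2 μ := hg.sub hhL2
  have hcentered : μ[g - h|m] =ᵐ[μ] 0 := by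
    filter_upwards [condExp_sub (hg.integrable one_le_two) (hhL2.integrable one_le_two) m, hgh]
      with ω hω hgω
    rw [hω, Pi.sub_apply, hgω, condExp_of_stronglyMeasurable hm hh (hhL2.integrable one_le_two),
      sub_self, Pi.zero_apply]
  have hcross := integral_inner_eq_zero_of_condExp_ae_eq_zero hm hhL2
    hh.aestronglyMeasurable hdiff hcentered
  have hinner : Integrable (fun ω => 2 * inner ℝ (h ω) ((g - h) ω)) μ :=
    ((L2.integrable_inner (𝕜 := ℝ) (hhL2.toLp h) (hdiff.toLp _)).congr (by
      filter_upwards [hhL2.coeFn_toLp, hdiff.coeFn_toLp] with ω h1 h2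
      rw [h1, h2])).const_mul 2
  have hsq : Integrable (fun ω => ‖(g - h) ω‖ ^ 2) μ := hdiff.integrable_norm_pow two_ne_zero
  have hrest : Integrable (fun ω => 2 * inner ℝ (h ω) ((g - h) ω) + ‖(g - h) ω‖ ^ 2) μ :=
    hinner.add hsq
  calc ∫ ω, ‖g ω‖ ^ 2 ∂μ
      = ∫ ω, ‖h ω‖ ^ 2 + (2 * inner ℝ (h ω) ((g - h) ω) + ‖(g - h) ω‖ ^ 2) ∂μ := by
        congr 1 with ω
        rw [← add_assoc, ← norm_add_sq_real, Pi.sub_apply, add_sub_cancel]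
    _ = ∫ ω, ‖h ω‖ ^ 2 ∂μ + ∫ ω, ‖g ω - h ω‖ ^ 2 ∂μ := by
        rw [integral_add (hhL2.integrable_norm_pow two_ne_zero) hrest,
          integral_add hinner hsq, integral_const_mul, hcross, mul_zero, zero_add]
        rfl

lemma integral_norm_sq_le_of_contraction (hm : m ≤ m0) {e e' g h : α → E} {w : α → F}
    {γ η c : ℝ} (hγ0 : 0 ≤ γ) (hγ1 : γ < 1) (he : MemLp e 2 μ) (hg : MemLp g 2 μ)
    (hw : MemLp w 2 μ) (hh : StronglyMeasurable[m] h) (hgh : μ[g|m] =ᵐ[μ] h)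
    (hrec : ∀ᵐ ω ∂μ, ‖e' ω‖ ≤ √(γ / 2) * ‖η • g ω + e ω‖ + c * ‖w ω‖) :
    ∫ ω, ‖e' ω‖ ^ 2 ∂μ ≤ (1 + γ) / 2 * ∫ ω, ‖e ω‖ ^ 2 ∂μ
      + γ * (1 + γ) / (1 - γ) * η ^ 2 * (∫ ω, ‖h ω‖ ^ 2 ∂μ + ∫ ω, ‖g ω - h ω‖ ^ 2 ∂μ)
      + 2 * c ^ 2 * ∫ ω, ‖w ω‖ ^ 2 ∂μ := by
  have hpointwise : ∀ᵐ ω ∂μ, ‖e' ω‖ ^ 2 ≤ (1 + γ) / 2 * ‖e ω‖ ^ 2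
      + γ * (1 + γ) / (1 - γ) * η ^ 2 * ‖g ω‖ ^ 2 + 2 * c ^ 2 * ‖w ω‖ ^ 2 := by
    filter_upwards [hrec] with ω hω
    have hyoung := mul_norm_add_sq_le hγ0 hγ1 (e ω) (η • g ω)
    rw [add_comm, norm_smul, mul_pow, Real.norm_eq_abs, sq_abs] at hyoung
    have := sq_le_of_le_sqrt_half_mul_add hγ0 (norm_nonneg _) hω
    nlinarith
  have he2 := (he.integrable_norm_pow two_ne_zero).const_mul ((1 + γ) / 2)
  have hg2 := (hg.integrable_norm_pow two_ne_zero).const_mul (γ * (1 + γ) / (1 - γ) * η ^ 2)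
  have hw2 := (hw.integrable_norm_pow two_ne_zero).const_mul (2 * c ^ 2)
  have heg : Integrable (fun ω => (1 + γ) / 2 * ‖e ω‖ ^ 2
      + γ * (1 + γ) / (1 - γ) * η ^ 2 * ‖g ω‖ ^ 2) μ := he2.add hg2
  calc ∫ ω, ‖e' ω‖ ^ 2 ∂μ
      ≤ ∫ ω, (1 + γ) / 2 * ‖e ω‖ ^ 2 + γ * (1 + γ) / (1 - γ) * η ^ 2 * ‖g ω‖ ^ 2
          + 2 * c ^ 2 * ‖w ω‖ ^ 2 ∂μ :=
        integral_mono_of_nonneg (.of_forall fun _ => by positivity) (heg.add hw2)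
          hpointwise
    _ = _ := by
        rw [integral_add heg hw2, integral_add he2 hg2, integral_const_mul,
          integral_const_mul, integral_const_mul,
          integral_norm_sq_eq_add_of_condExp_ae_eq hm hg hh hgh]

end ConditionalExpectation

theorem stmt13_general (d Q T : ℕ)
    (γ η G σ Cn : ℝ) (hγ0 : 0 < γ) (hγ1 : γ < 1)
    {Ω : Type*} {m : MeasurableSpace Ω} (P : Measure Ω) [IsProbabilityMeasure P]
    (ℱ : Filtration ℕ m)
    (f : EuclideanSpace ℝ (Fin d) → ℝ)
    (x e g : ℕ → Ω → EuclideanSpace ℝ (Fin d)) (w : ℕ → Ω → EuclideanSpace ℝ (Fin Q))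
    (hx : ∀ t, 1 ≤ t → t ≤ T → StronglyMeasurable[ℱ t] (x t))
    (heL2 : ∀ t, 1 ≤ t → t ≤ T + 1 → MemLp (e t) 2 P)
    (hgL2 : ∀ t, 1 ≤ t → t ≤ T → MemLp (g t) 2 P)
    (hwL2 : ∀ t, 1 ≤ t → t ≤ T → MemLp (w t) 2 P)
    (hcond : ∀ t, 1 ≤ t → t ≤ T → P[g t|ℱ t] =ᵐ[P] fun ω => gradient f (x t ω))
    (hvar : ∀ t, 1 ≤ t → t ≤ T → ∫ ω, ‖g t ω - gradient f (x t ω)‖ ^ 2 ∂P ≤ G ^ 2)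
    (hnoise : ∀ t, 1 ≤ t → t ≤ T → ∫ ω, ‖w t ω‖ ^ 2 ∂P ≤ σ ^ 2)
    (he1 : e 1 = 0)
    (hrec : ∀ t, 1 ≤ t → t ≤ T → ∀ᵐ ω ∂P,
        ‖e (t + 1) ω‖ ≤ Real.sqrt (γ / 2) * ‖η • g t ω + e t ω‖
          + η * (Cn + Real.sqrt ((Q : ℝ) / d)) * ‖w t ω‖) :
    (1 / (T : ℝ)) * ∑ t ∈ Finset.Icc 1 T, ∫ ω, ‖e t ω‖ ^ 2 ∂P ≤
      2 * η ^ 2 / (1 - γ) * (γ * (1 + γ) / (1 - γ) * G ^ 2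
          + 2 * (Cn + Real.sqrt ((Q : ℝ) / d)) ^ 2 * σ ^ 2)
      + 2 * η ^ 2 * γ * (1 + γ) / (1 - γ) ^ 2 *
          ((1 / (T : ℝ)) * ∑ t ∈ Finset.Icc 1 T, ∫ ω, ‖gradient f (x t ω)‖ ^ 2 ∂P) := by
  set K := Cn + Real.sqrt ((Q : ℝ) / d)
  set β := γ * (1 + γ) / (1 - γ) * η ^ 2 with hβ_def
  have h1γ : 0 < 1 - γ := sub_pos.mpr hγ1
  have hβ : 0 ≤ β := by positivity
  have hstep : ∀ t ∈ Finset.Icc 1 T, ∫ ω, ‖e (t + 1) ω‖ ^ 2 ∂P ≤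
      (1 + γ) / 2 * ∫ ω, ‖e t ω‖ ^ 2 ∂P
        + (β * ∫ ω, ‖gradient f (x t ω)‖ ^ 2 ∂P + (β * G ^ 2 + 2 * (η * K) ^ 2 * σ ^ 2)) := by
    intro t ht
    obtain ⟨ht1, htT⟩ := Finset.mem_Icc.mp ht
    have hgrad : StronglyMeasurable[ℱ t] fun ω => gradient f (x t ω) :=
      ((measurable_gradient f).comp (hx t ht1 htT).measurable).stronglyMeasurable
    calc ∫ ω, ‖e (t + 1) ω‖ ^ 2 ∂P
        ≤ _ := integral_norm_sq_le_of_contraction (ℱ.le t) hγ0.le hγ1 (heL2 t ht1 (by omega))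
          (hgL2 t ht1 htT) (hwL2 t ht1 htT) hgrad (hcond t ht1 htT) (hrec t ht1 htT)
      _ ≤ (1 + γ) / 2 * ∫ ω, ‖e t ω‖ ^ 2 ∂P
            + β * (∫ ω, ‖gradient f (x t ω)‖ ^ 2 ∂P + G ^ 2) + 2 * (η * K) ^ 2 * σ ^ 2 := by
        gcongr
        · exact hvar t ht1 htT
        · exact hnoise t ht1 htT
      _ = _ := by ring
  calc 1 / (T : ℝ) * ∑ t ∈ Finset.Icc 1 T, ∫ ω, ‖e t ω‖ ^ 2 ∂P
      ≤ (β * G ^ 2 + 2 * (η * K) ^ 2 * σ ^ 2 + 1 / (T : ℝ) * ∑ t ∈ Finset.Icc 1 T,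
          β * ∫ ω, ‖gradient f (x t ω)‖ ^ 2 ∂P) / (1 - (1 + γ) / 2) :=
        average_Icc_le_of_le_mul_add (by linarith) (by positivity) (by simp [he1])
          (integral_nonneg fun _ => by positivity) hstep
    _ = _ := by
      rw [← Finset.mul_sum, hβ_def, show 1 - (1 + γ) / 2 = (1 - γ) / 2 by ring]
      field_simp

theorem stmt13 (d Q T : ℕ) (hd : 0 < d) (hQ : 0 < Q) (hT : 0 < T) (hQd : Q ≤ d)
    (γ η G σ Cn : ℝ) (hγ0 : 0 < γ) (hγ1 : γ < 1) (hη : 0 < η)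
    (hG : 0 ≤ G) (hσ : 0 ≤ σ) (hCn : 0 ≤ Cn)
    {Ω : Type*} {m : MeasurableSpace Ω} (P : Measure Ω) [IsProbabilityMeasure P]
    (ℱ : Filtration ℕ m)
    (f : EuclideanSpace ℝ (Fin d) → ℝ) (hf : Differentiable ℝ f)
    (x e g : ℕ → Ω → EuclideanSpace ℝ (Fin d)) (w : ℕ → Ω → EuclideanSpace ℝ (Fin Q))
    (hx : ∀ t, 1 ≤ t → t ≤ T → StronglyMeasurable[ℱ t] (x t))
    (he : ∀ t, 1 ≤ t → t ≤ T → StronglyMeasurable[ℱ t] (e t))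
    (hg : ∀ t, 1 ≤ t → t ≤ T → StronglyMeasurable[ℱ (t + 1)] (g t))
    (hw : ∀ t, 1 ≤ t → t ≤ T → StronglyMeasurable[ℱ (t + 1)] (w t))
    (hxL2 : ∀ t, 1 ≤ t → t ≤ T → MemLp (x t) 2 P)
    (heL2 : ∀ t, 1 ≤ t → t ≤ T + 1 → MemLp (e t) 2 P)
    (hgL2 : ∀ t, 1 ≤ t → t ≤ T → MemLp (g t) 2 P)
    (hwL2 : ∀ t, 1 ≤ t → t ≤ T → MemLp (w t) 2 P)
    (hcond : ∀ t, 1 ≤ t → t ≤ T → P[g t|ℱ t] =ᵐ[P] fun ω => gradient f (x t ω))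
    (hvar : ∀ t, 1 ≤ t → t ≤ T → ∫ ω, ‖g t ω - gradient f (x t ω)‖ ^ 2 ∂P ≤ G ^ 2)
    (hnoise : ∀ t, 1 ≤ t → t ≤ T → ∫ ω, ‖w t ω‖ ^ 2 ∂P ≤ σ ^ 2)
    (he1 : e 1 = 0)
    (hrec : ∀ t, 1 ≤ t → t ≤ T → ∀ᵐ ω ∂P,
        ‖e (t + 1) ω‖ ≤ Real.sqrt (γ / 2) * ‖η • g t ω + e t ω‖
          + η * (Cn + Real.sqrt ((Q : ℝ) / d)) * ‖w t ω‖) :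
    (1 / (T : ℝ)) * ∑ t ∈ Finset.Icc 1 T, ∫ ω, ‖e t ω‖ ^ 2 ∂P ≤
      2 * η ^ 2 / (1 - γ) * (γ * (1 + γ) / (1 - γ) * G ^ 2
          + 2 * (Cn + Real.sqrt ((Q : ℝ) / d)) ^ 2 * σ ^ 2)
      + 2 * η ^ 2 * γ * (1 + γ) / (1 - γ) ^ 2 *
          ((1 / (T : ℝ)) * ∑ t ∈ Finset.Icc 1 T, ∫ ω, ‖gradient f (x t ω)‖ ^ 2 ∂P) :=
  stmt13_general d Q T γ η G σ Cn hγ0 hγ1 P ℱ f x e g w hx heL2 hgL2 hwL2 hcond hvar hnoise he1 hrec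
end
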